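/- The 2-Wasserstein distance squared between Gaussian mixtures is bounded above by the optimal value of the following linear program over component couplings: W₂²(∑_i α₀ⁱ N(m₀ⁱ, Σ₀ⁱ), ∑_j α₁ʲ N(m₁ʲ, Σ₁ʲ)) ≤ ∑_{i,j} λ_{ij} W₂²(N(m₀ⁱ, Σ₀ⁱ), N(m₁ʲ, Σ₁ʲ)) for any λ_{ij} ≥ 0 with row sums α₀ⁱ and column sums α₁ʲ, where W₂² between probability measures ρ₀, ρ₁ is defined as the infimum over couplings π of ∫ ‖x−y‖² dπ. (It suffices to prove the more abstract statement: for any families of probability measures μᵢ, νⱼ with finite second moments, W₂²(∑ α₀ⁱ μᵢ, ∑ α₁ʲ νⱼ) ≤ ∑_{ij} λ_{ij} W₂²(μᵢ, νⱼ).) -/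

import Mathlib

open MeasureTheory

/-- Squared 2-Wasserstein "distance": infimum over couplings of the expected
squared distance. -/
noncomputable def W2sq {d : ℕ} (ρ₀ ρ₁ : Measure (EuclideanSpace ℝ (Fin d))) : ℝ :=
  sInf { r : ℝ | ∃ π : Measure (EuclideanSpace ℝ (Fin d) × EuclideanSpace ℝ (Fin d)),
    IsProbabilityMeasure π ∧ π.map Prod.fst = ρ₀ ∧ π.map Prod.snd = ρ₁ ∧
    r = ∫ p, ‖p.1 - p.2‖ ^ 2 ∂π }

/-!
Glue `ε`-optimal couplings `πᵢⱼ` of the components `(μᵢ, νⱼ)` into the mixture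
`π = ∑ λᵢⱼ πᵢⱼ`. The row and column sums of `λ` make `π` a coupling of the two
mixtures, and since the transport cost is linear in the coupling, that of `π` is
`∑ λᵢⱼ ∫ ‖x - y‖² dπᵢⱼ ≤ ∑ λᵢⱼ W₂²(μᵢ, νⱼ) + ε`.
-/

open Finset ENNReal

namespace MeasureTheory.Measure

variable {α β ι κ : Type*} [MeasurableSpace α] [MeasurableSpace β]

lemma map_sum_smul {f : α → β} (hf : Measurable f) (s : Finset ι) (c : ι → ℝ≥0∞)
    (μ : ι → Measure α) :
    (∑ i ∈ s, c i • μ i).map f = ∑ i ∈ s, c i • (μ i).map f := by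
  simp only [← mapₗ_apply_of_measurable hf, _root_.map_sum, _root_.map_smul]

variable [Fintype ι] [Fintype κ]

lemma isProbabilityMeasure_sum_ofReal_smul {μ : ι → Measure α}
    (hμ : ∀ i, IsProbabilityMeasure (μ i)) {w : ι → ℝ} (hw : ∀ i, 0 ≤ w i)
    (hw_sum : ∑ i, w i = 1) :
    IsProbabilityMeasure (∑ i, ENNReal.ofReal (w i) • μ i) := by
  constructor
  simp only [finsetSum_apply, smul_apply, measure_univ, smul_eq_mul, mul_one]
  rw [← ofReal_sum_of_nonneg fun i _ => hw i, hw_sum, ofReal_one]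

lemma sum_prod_ofReal_smul_fst {w : ι × κ → ℝ} (hw : ∀ p, 0 ≤ w p)
    (μ : ι → Measure α) :
    ∑ p, ENNReal.ofReal (w p) • μ p.1 = ∑ i, ENNReal.ofReal (∑ j, w (i, j)) • μ i := by
  rw [Fintype.sum_prod_type]
  refine Finset.sum_congr rfl fun i _ => ?_
  rw [ofReal_sum_of_nonneg fun j _ => hw (i, j), sum_smul]

lemma sum_prod_ofReal_smul_snd {w : ι × κ → ℝ} (hw : ∀ p, 0 ≤ w p)
    (ν : κ → Measure α) :
    ∑ p, ENNReal.ofReal (w p) • ν p.2 = ∑ j, ENNReal.ofReal (∑ i, w (i, j)) • ν j := by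
  rw [Fintype.sum_prod_type_right]
  refine Finset.sum_congr rfl fun j _ => ?_
  rw [ofReal_sum_of_nonneg fun i _ => hw (i, j), sum_smul]

end MeasureTheory.Measure

lemma MeasureTheory.integral_sum_ofReal_smul_measure {α E ι : Type*} [MeasurableSpace α]
    [NormedAddCommGroup E] [NormedSpace ℝ E] [Fintype ι] {f : α → E} {μ : ι → Measure α}
    (hf : ∀ i, Integrable f (μ i)) {w : ι → ℝ} (hw : ∀ i, 0 ≤ w i) :
    ∫ x, f x ∂(∑ i, ENNReal.ofReal (w i) • μ i) = ∑ i, w i • ∫ x, f x ∂(μ i) := by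
  rw [integral_finsetSum_measure fun i _ => (hf i).smul_measure ofReal_ne_top]
  simp only [integral_smul_measure, toReal_ofReal (hw _)]

lemma MeasureTheory.integrable_norm_sub_sq {E : Type*} [NormedAddCommGroup E]
    [MeasurableSpace E] [BorelSpace E] [SecondCountableTopology E] {π : Measure (E × E)}
    (h₀ : Integrable (fun x => ‖x‖ ^ 2) (π.map Prod.fst))
    (h₁ : Integrable (fun x => ‖x‖ ^ 2) (π.map Prod.snd)) :
    Integrable (fun p : E × E => ‖p.1 - p.2‖ ^ 2) π := by
  have hL2 : ∀ {g : E × E → E}, Measurable g →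
      Integrable (fun x => ‖x‖ ^ 2) (π.map g) → MemLp g 2 π := fun hg h =>
    ((memLp_map_measure_iff aestronglyMeasurable_id hg.aemeasurable).1
      ((memLp_two_iff_integrable_sq_norm aestronglyMeasurable_id).2 h))
  rw [← memLp_two_iff_integrable_sq_norm (by fun_prop)]
  exact (hL2 measurable_fst h₀).sub (hL2 measurable_snd h₁)

section W2sq

variable {d : ℕ}

local notation "E" => EuclideanSpace ℝ (Fin d)

lemma W2sq_le_integral {ρ₀ ρ₁ : Measure E} (π : Measure (E × E)) [IsProbabilityMeasure π]
    (h₀ : π.map Prod.fst = ρ₀) (h₁ : π.map Prod.snd = ρ₁) :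
    W2sq ρ₀ ρ₁ ≤ ∫ p, ‖p.1 - p.2‖ ^ 2 ∂π := by
  refine csInf_le ⟨0, ?_⟩ ⟨π, inferInstance, h₀, h₁, rfl⟩
  rintro r ⟨π', -, -, -, rfl⟩
  exact integral_nonneg fun _ => by positivity

lemma exists_coupling_integral_lt_W2sq_add (ρ₀ ρ₁ : Measure E) [IsProbabilityMeasure ρ₀]
    [IsProbabilityMeasure ρ₁] {ε : ℝ} (hε : 0 < ε) :
    ∃ π : Measure (E × E), IsProbabilityMeasure π ∧ π.map Prod.fst = ρ₀ ∧
      π.map Prod.snd = ρ₁ ∧ ∫ p, ‖p.1 - p.2‖ ^ 2 ∂π < W2sq ρ₀ ρ₁ + ε := by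
  obtain ⟨_, ⟨π, hπ, h₀, h₁, rfl⟩, hlt⟩ := Real.lt_sInf_add_pos
    (s := {r | ∃ π : Measure (E × E), IsProbabilityMeasure π ∧ π.map Prod.fst = ρ₀ ∧
      π.map Prod.snd = ρ₁ ∧ r = ∫ p, ‖p.1 - p.2‖ ^ 2 ∂π})
    ⟨_, ρ₀.prod ρ₁, inferInstance, by simp, by simp, rfl⟩ hε
  exact ⟨π, hπ, h₀, h₁, hlt⟩

end W2sq

theorem stmt_5 (N₀ N₁ d : ℕ)
    (μ : Fin N₀ → Measure (EuclideanSpace ℝ (Fin d)))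
    (ν : Fin N₁ → Measure (EuclideanSpace ℝ (Fin d)))
    (hμ : ∀ i, IsProbabilityMeasure (μ i)) (hν : ∀ j, IsProbabilityMeasure (ν j))
    (hμ2 : ∀ i, Integrable (fun x => ‖x‖ ^ 2) (μ i))
    (hν2 : ∀ j, Integrable (fun x => ‖x‖ ^ 2) (ν j))
    (lam : Fin N₀ × Fin N₁ → ℝ) (hlam : ∀ p, 0 ≤ lam p)
    (α₀ : Fin N₀ → ℝ) (α₁ : Fin N₁ → ℝ)
    (hrow : ∀ i, ∑ j, lam (i, j) = α₀ i)
    (hcol : ∀ j, ∑ i, lam (i, j) = α₁ j)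
    (hα₀ : ∑ i, α₀ i = 1) :
    W2sq (∑ i, ENNReal.ofReal (α₀ i) • μ i) (∑ j, ENNReal.ofReal (α₁ j) • ν j)
      ≤ ∑ p : Fin N₀ × Fin N₁, lam p * W2sq (μ p.1) (ν p.2) := by
  have hlam_sum : ∑ p, lam p = 1 := by simp only [Fintype.sum_prod_type, hrow, hα₀]
  refine le_of_forall_pos_le_add fun ε hε => ?_
  choose π hπ h₀ h₁ hπ_cost using fun p : Fin N₀ × Fin N₁ =>
    exists_coupling_integral_lt_W2sq_add (μ p.1) (ν p.2) hε
  have hπ_int p : Integrable (fun q => ‖q.1 - q.2‖ ^ 2) (π p) :=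
    integrable_norm_sub_sq ((h₀ p).symm ▸ hμ2 p.1) ((h₁ p).symm ▸ hν2 p.2)
  have := Measure.isProbabilityMeasure_sum_ofReal_smul hπ hlam hlam_sum
  calc W2sq _ _ ≤ ∫ q, ‖q.1 - q.2‖ ^ 2 ∂(∑ p, ENNReal.ofReal (lam p) • π p) := by
        refine W2sq_le_integral _ ?_ ?_
        · simp only [Measure.map_sum_smul measurable_fst, h₀,
            Measure.sum_prod_ofReal_smul_fst hlam, hrow]
        · simp only [Measure.map_sum_smul measurable_snd, h₁,
            Measure.sum_prod_ofReal_smul_snd hlam, hcol]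
    _ = ∑ p, lam p * ∫ q, ‖q.1 - q.2‖ ^ 2 ∂(π p) :=
        integral_sum_ofReal_smul_measure hπ_int hlam
    _ ≤ ∑ p, lam p * (W2sq (μ p.1) (ν p.2) + ε) :=
        sum_le_sum fun p _ => mul_le_mul_of_nonneg_left (hπ_cost p).le (hlam p)
    _ = ∑ p, lam p * W2sq (μ p.1) (ν p.2) + ε := by
        simp only [mul_add, sum_add_distrib, ← sum_mul, hlam_sum, one_mul]
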